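/- arXiv:2412.08922 — 2 statements merged into one kernel-verified Lean document; each statement's English description precedes it below -/
import Mathlib

section
/- Let m be a positive integer, let E_1, …, E_m be real inner product spaces, and for each pair (k, i) with 1 ≤ k ≤ i ≤ m let g_i^{(k)} ∈ E_k, with every dominant gradient g_k^{(k)} nonzero. Let α_1, …, α_m be strictly positive real numbers such that for every k < i ≤ m with ⟨g_i^{(k)}, g_k^{(k)}⟩ < 0 one has α_i ≤ (α_k / (k − m)) · ‖g_k^{(k)}‖² / ⟨g_i^{(k)}, g_k^{(k)}⟩. Then for every k with 1 ≤ k ≤ m the total gradient g^{(k)} = Σ_{i=k}^{m} α_i g_i^{(k)} satisfies ⟨g^{(k)}, g_k^{(k)}⟩ ≥ 0; that is, the update of every nested parameter W^{(k)} is align-domination. (The guarantee of the Dominance-Aware Dynamic Weighting strategy, combining the paper's Propositions 1–2 with Eq. (8).) -/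
open RealInnerProductSpace Finset

lemma neg_le_mul_of_le_neg_div {a c D : ℝ} (ha : 0 ≤ a) (hD : 0 ≤ D)
    (h : c < 0 → a ≤ -D / c) : -D ≤ a * c := by
  rcases le_or_gt 0 c with hc | hc
  · nlinarith [mul_nonneg ha hc]
  · exact (le_div_iff_of_neg hc).mp (h hc)

lemma neg_le_sum_of_forall_neg_div_card_le {ι : Type*} {s : Finset ι} {f : ι → ℝ} {C : ℝ}
    (hC : 0 ≤ C) (h : ∀ i ∈ s, -(C / #s) ≤ f i) : -C ≤ ∑ i ∈ s, f i := by
  rcases s.eq_empty_or_nonempty with rfl | hs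
  · simpa using hC
  · have hcard : (#s : ℝ) ≠ 0 := by exact_mod_cast hs.card_pos.ne'
    calc -C = #s • -(C / #s) := by rw [nsmul_eq_mul]; field_simp
      _ ≤ ∑ i ∈ s, f i := card_nsmul_le_sum s f _ h

/- The dominant term `α k ‖u k‖²` pays for each of the `m - k` negatively aligned terms
at most its `(m - k)`-th part, which is exactly what the weight bound expresses. -/
theorem inner_sum_smul_dominant_nonneg {E : Type*} [NormedAddCommGroup E]
    [InnerProductSpace ℝ E] (u : ℕ → E) (α : ℕ → ℝ) {k m : ℕ} (hkm : k ≤ m)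
    (hα : ∀ i ∈ Icc k m, 0 ≤ α i)
    (hbound : ∀ i ∈ Ioc k m, ⟪u i, u k⟫ < 0 →
      α i ≤ (α k / ((k : ℝ) - (m : ℝ))) * ‖u k‖ ^ 2 / ⟪u i, u k⟫) :
    0 ≤ ⟪∑ i ∈ Icc k m, α i • u i, u k⟫ := by
  rw [← Ioc_insert_left hkm, sum_insert left_notMem_Ioc, inner_add_left,
    real_inner_smul_left, real_inner_self_eq_norm_sq, sum_inner]
  set C := α k * ‖u k‖ ^ 2
  have hC : 0 ≤ C := mul_nonneg (hα k (left_mem_Icc.mpr hkm)) (sq_nonneg _)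
  have hcard : (#(Ioc k m) : ℝ) = m - k := by rw [Nat.card_Ioc, Nat.cast_sub hkm]
  have hterm : ∀ i ∈ Ioc k m, -(C / #(Ioc k m)) ≤ ⟪α i • u i, u k⟫ := by
    intro i hi
    have hmk : (m : ℝ) - k ≠ 0 := by
      have : k < m := (mem_Ioc.mp hi).1.trans_le (mem_Ioc.mp hi).2
      exact sub_ne_zero.mpr (by exact_mod_cast this.ne')
    rw [real_inner_smul_left]
    refine neg_le_mul_of_le_neg_div (hα i (Ioc_subset_Icc_self hi)) (by positivity) ?_
    intro hc
    convert hbound i hi hc using 2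
    rw [hcard, ← neg_sub, div_neg, neg_neg]
    ring
  linarith [neg_le_sum_of_forall_neg_div_card_le hC hterm]

theorem dominance_aware_weighting_align_domination_general
    {E : ℕ → Type*} [∀ k, NormedAddCommGroup (E k)]
    [∀ k, InnerProductSpace ℝ (E k)]
    (m : ℕ)
    (g : (k : ℕ) → ℕ → E k)
    (α : ℕ → ℝ) (hα : ∀ i, 1 ≤ i → i ≤ m → 0 < α i)
    (hbound : ∀ k i, 1 ≤ k → k < i → i ≤ m →
      ⟪g k i, g k k⟫ < 0 →
        α i ≤ (α k / ((k : ℝ) - (m : ℝ))) * ‖g k k‖ ^ 2 / ⟪g k i, g k k⟫) :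
    ∀ k, 1 ≤ k → k ≤ m →
      0 ≤ ⟪∑ i ∈ Finset.Icc k m, α i • g k i, g k k⟫ := by
  intro k hk hkm
  refine inner_sum_smul_dominant_nonneg (g k) α hkm (fun i hi => ?_) (fun i hi => ?_)
  · obtain ⟨hki, him⟩ := mem_Icc.mp hi
    exact (hα i (hk.trans hki) him).le
  · obtain ⟨hki, him⟩ := mem_Ioc.mp hi
    exact hbound k i hk hki him

/-- The guarantee of the Dominance-Aware Dynamic Weighting strategy: if the
strictly positive weights `α` satisfy the bound
`α i ≤ (α k / (k - m)) * ‖g k k‖² / ⟪g k i, g k k⟫` whenever `k < i ≤ m` and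
`⟪g k i, g k k⟫ < 0`, then every nested parameter `W^{(k)}` is updated in an
align-domination manner: `⟪∑_{i=k}^m α i • g k i, g k k⟫ ≥ 0`. Here `g k i`
denotes `g_i^{(k)} ∈ E k` and `g k k` is the dominant gradient. -/
theorem dominance_aware_weighting_align_domination
    {E : ℕ → Type*} [∀ k, NormedAddCommGroup (E k)]
    [∀ k, InnerProductSpace ℝ (E k)]
    (m : ℕ) (hm : 0 < m)
    (g : (k : ℕ) → ℕ → E k)
    (hdom : ∀ k, 1 ≤ k → k ≤ m → g k k ≠ 0)
    (α : ℕ → ℝ) (hα : ∀ i, 1 ≤ i → i ≤ m → 0 < α i)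
    (hbound : ∀ k i, 1 ≤ k → k < i → i ≤ m →
      ⟪g k i, g k k⟫ < 0 →
        α i ≤ (α k / ((k : ℝ) - (m : ℝ))) * ‖g k k‖ ^ 2 / ⟪g k i, g k k⟫) :
    ∀ k, 1 ≤ k → k ≤ m →
      0 ≤ ⟪∑ i ∈ Finset.Icc k m, α i • g k i, g k k⟫ :=
  dominance_aware_weighting_align_domination_general m g α hα hbound
end

section
/- Let m be a positive integer, let E_1, …, E_m be real inner product spaces, and for each pair (k, i) with 1 ≤ k ≤ i ≤ m let g_i^{(k)} ∈ E_k, with every dominant gradient g_k^{(k)} nonzero. Define weights recursively by α_1 = 1 and, for i > 1, α_i = min_{1 ≤ k ≤ i} α_i^{(k)}, where α_i^{(k)} = 1 if ⟨g_i^{(k)}, g_k^{(k)}⟩ ≥ 0 and α_i^{(k)} = (α_k / (k − m)) · ‖g_k^{(k)}‖² / ⟨g_i^{(k)}, g_k^{(k)}⟩ if ⟨g_i^{(k)}, g_k^{(k)}⟩ < 0 (note α_i^{(i)} = 1 since ⟨g_i^{(i)}, g_i^{(i)}⟩ ≥ 0, so the recursion only uses α_k for k < i). Then this recursion is well defined,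 every α_i satisfies 0 < α_i ≤ 1, and for every k with 1 ≤ k ≤ m the total gradient g^{(k)} = Σ_{i=k}^{m} α_i g_i^{(k)} satisfies ⟨g^{(k)}, g_k^{(k)}⟩ ≥ 0. (Correctness of the weights produced by Eqs. (7)–(8) of the paper.) -/
open RealInnerProductSpace

/-- Correctness of the weights produced by Eqs. (7)–(8) of the paper: if
`α 1 = 1` and for `1 < i ≤ m`,
`α i = min_{1 ≤ k ≤ i} α_i^{(k)}` where `α_i^{(k)} = 1` when
`⟪g_i^{(k)}, g_k^{(k)}⟫ ≥ 0` and
`α_i^{(k)} = (α k / (k - m)) * ‖g_k^{(k)}‖² / ⟪g_i^{(k)}, g_k^{(k)}⟫`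
otherwise, then every `α i` satisfies `0 < α i ≤ 1` and the update of every
nested parameter is align-domination:
`⟪∑_{i=k}^m α i • g_i^{(k)}, g_k^{(k)}⟫ ≥ 0`. Here `g k i` denotes
`g_i^{(k)} ∈ E k`. -/
theorem recursive_weights_correct
    {E : ℕ → Type*} [∀ k, NormedAddCommGroup (E k)]
    [∀ k, InnerProductSpace ℝ (E k)]
    (m : ℕ) (hm : 0 < m)
    (g : (k : ℕ) → ℕ → E k)
    (hdom : ∀ k, 1 ≤ k → k ≤ m → g k k ≠ 0)
    (α : ℕ → ℝ)
    (hα1 : α 1 = 1)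
    (hrec : ∀ i, (hi : 1 < i) → i ≤ m →
      α i = (Finset.Icc 1 i).inf'
          (Finset.nonempty_Icc.mpr hi.le)
          (fun k =>
            if 0 ≤ ⟪g k i, g k k⟫ then (1 : ℝ)
            else (α k / ((k : ℝ) - (m : ℝ))) * ‖g k k‖ ^ 2 / ⟪g k i, g k k⟫)) :
    (∀ i, 1 ≤ i → i ≤ m → 0 < α i ∧ α i ≤ 1) ∧
    (∀ k, 1 ≤ k → k ≤ m →
      0 ≤ ⟪∑ i ∈ Finset.Icc k m, α i • g k i, g k k⟫) := by
  have hnorm : ∀ k, 1 ≤ k → k ≤ m → (0:ℝ) < ‖g k k‖ ^ 2 := fun k h1 h2 =>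
    pow_pos (norm_pos_iff.mpr (hdom k h1 h2)) 2
  have hA : ∀ i, 1 ≤ i → i ≤ m → 0 < α i ∧ α i ≤ 1 := by
    intro i
    induction i using Nat.strong_induction_on with
    | _ i ih =>
      intro h1 him
      rcases eq_or_lt_of_le h1 with h | h
      · rw [← h, hα1]; exact ⟨one_pos, le_refl 1⟩
      · rw [hrec i h him]
        constructor
        · rw [Finset.lt_inf'_iff]
          intro k hk
          simp only [Finset.mem_Icc] at hk
          split_ifs with hip
          · exact one_pos
          · push_neg at hip
            have hki : k ≠ i := by
              rintro rfl
              exact absurd real_inner_self_nonneg (not_le.mpr hip)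
            have hklt : k < i := lt_of_le_of_ne hk.2 hki
            have hαk := ih k hklt hk.1 (le_trans hk.2 him)
            have hkm : (k:ℝ) - m < 0 := by
              have h2 : (k:ℝ) < m := by exact_mod_cast lt_of_lt_of_le hklt him
              linarith
            exact div_pos_of_neg_of_neg
              (mul_neg_of_neg_of_pos (div_neg_of_pos_of_neg hαk.1 hkm)
                (hnorm k hk.1 (le_trans hk.2 him))) hip
        · have hi : i ∈ Finset.Icc 1 i := Finset.mem_Icc.mpr ⟨h1, le_refl i⟩
          refine le_trans (Finset.inf'_le _ hi) ?_
          rw [if_pos real_inner_self_nonneg]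
  refine ⟨hA, ?_⟩
  intro k h1 hkm
  rw [sum_inner]
  simp only [real_inner_smul_left]
  have hC := hnorm k h1 hkm
  have hαk := hA k h1 hkm
  have hknot : k ∉ Finset.Icc (k+1) m := by simp
  have hsplit : Finset.Icc k m = insert k (Finset.Icc (k+1) m) := by
    ext x
    simp only [Finset.mem_Icc, Finset.mem_insert]
    omega
  rw [hsplit, Finset.sum_insert hknot, real_inner_self_eq_norm_sq]
  set C := α k * ‖g k k‖^2 with hCdef
  have hCpos : 0 < C := mul_pos hαk.1 hC
  rcases eq_or_lt_of_le hkm with heq | hlt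
  · subst heq
    simp only [Finset.Icc_self, Finset.Icc_eq_empty_of_lt (Nat.lt_succ_self k),
      Finset.sum_empty, add_zero]
    linarith
  · have hkmR : (k:ℝ) - m < 0 := by
      have h2 : (k:ℝ) < m := by exact_mod_cast hlt
      linarith
    set c := C / ((k:ℝ) - m) with hc
    have hcneg : c < 0 := div_neg_of_pos_of_neg hCpos hkmR
    have hbound : ∀ i ∈ Finset.Icc (k+1) m, c ≤ α i * ⟪g k i, g k k⟫ := by
      intro i hi
      simp only [Finset.mem_Icc] at hi
      have h1i : 1 < i := lt_of_le_of_lt h1 (Nat.lt_of_succ_le hi.1)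
      by_cases hinner : 0 ≤ ⟪g k i, g k k⟫
      · exact le_trans hcneg.le (mul_nonneg (hA i h1i.le hi.2).1.le hinner)
      · push_neg at hinner
        have hαile : α i ≤ (α k / ((k:ℝ) - m)) * ‖g k k‖^2 / ⟪g k i, g k k⟫ := by
          rw [hrec i h1i hi.2]
          have hkmem : k ∈ Finset.Icc 1 i := Finset.mem_Icc.mpr ⟨h1, by omega⟩
          refine le_trans (Finset.inf'_le _ hkmem) ?_
          rw [if_neg (not_le.mpr hinner)]
        calc c = (α k / ((k:ℝ) - m)) * ‖g k k‖^2 / ⟪g k i, g k k⟫ * ⟪g k i, g k k⟫ := by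
                rw [div_mul_cancel₀ _ hinner.ne, hc, hCdef]; ring
          _ ≤ α i * ⟪g k i, g k k⟫ := mul_le_mul_of_nonpos_right hαile hinner.le
    have hsum := Finset.card_nsmul_le_sum _ _ _ hbound
    rw [Nat.card_Icc, nsmul_eq_mul] at hsum
    have hcast : ((m + 1 - (k+1) : ℕ) : ℝ) = (m:ℝ) - k := by
      have : m + 1 - (k+1) = m - k := by omega
      rw [this, Nat.cast_sub hkm]
    rw [hcast] at hsum
    have hkey : ((m:ℝ) - k) * c = -C := by
      rw [hc, show (m:ℝ) - k = -((k:ℝ) - m) by ring, neg_mul, mul_comm,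
        div_mul_cancel₀ _ hkmR.ne]
    linarith
end
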